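/- For every block length n ≤ 8 and every crossover probability ε ∈ (0,1/2), there exists a linear (n,2) binary code C (a 4-codeword subgroup of {0,1}^n) such that λ_C ≥ λ_{C'} for every (n,2) code C' with 4 codewords; i.e., linear (n,2) codes are optimal under ML decoding on the BSC. -/

import Mathlib

open Finset

/-- Minimum Hamming distance from `y` to the 4 rows (codewords) of `C`. -/
def dmin {m : ℕ} (C : Fin 4 → Fin m → ZMod 2) (y : Fin m → ZMod 2) : ℕ :=
  Finset.univ.inf' ⟨0, Finset.mem_univ 0⟩ (fun i => hammingDist (C i) y)

/-- Number of outputs at min-distance `d` from the code `C`. -/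
def alpha {m : ℕ} (C : Fin 4 → Fin m → ZMod 2) (d : ℕ) : ℕ :=
  (Finset.univ.filter (fun y : Fin m → ZMod 2 => dmin C y = d)).card

/-- Average ML correct decoding probability of `C` on a BSC with crossover `ε`. -/
noncomputable def lam {m : ℕ} (C : Fin 4 → Fin m → ZMod 2) (ε : ℝ) : ℝ :=
  (1/4) * ∑ d ∈ Finset.range (m+1), (alpha C d : ℝ) * (1-ε)^(m-d) * ε^d

/-- The column pattern (in `{0,1}^4`) associated with the integer `i`,
row 1 being the most significant bit. -/
def pat (i : ℕ) : Fin 4 → ZMod 2 := fun j => if Nat.testBit i (3 - (j : ℕ)) then 1 else 0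

/-- Number of columns of `C` equal to the pattern `p`. -/
def colCount {m : ℕ} (C : Fin 4 → Fin m → ZMod 2) (p : Fin 4 → ZMod 2) : ℕ :=
  (Finset.univ.filter (fun k : Fin m => (fun i => C i k) = p)).card

/-- A code is linear if its set of codewords is a subgroup of `({0,1}^n, ⊕)`. -/
def IsLinearCode {m : ℕ} (C : Fin 4 → Fin m → ZMod 2) : Prop :=
  ∃ H : AddSubgroup (Fin m → ZMod 2), Set.range C = (H : Set (Fin m → ZMod 2))

/-- `w_i(y)`: number of positions with column pattern `i` where `y` is 1. -/
def wcount {m : ℕ} (C : Fin 4 → Fin m → ZMod 2) (i : ℕ) (y : Fin m → ZMod 2) : ℕ :=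
  (Finset.univ.filter (fun k : Fin m => (fun r => C r k) = pat i ∧ y k = 1)).card

/-!
Writing `w d = (1 - ε)^(n - d) ε^d`, we have `λ_C = ¼ Σ_y w (dmin C y)`, and `w` is decreasing
for `ε ≤ 1/2`. Summation by parts turns `λ_C` into a combination, with nonnegative coefficients
`w r - w (r + 1)`, of the numbers `coverCard C r` of outputs within distance `r` of `C`; so a code
maximising every `coverCard C r` at once is optimal. The union bound gives
`coverCard C r ≤ min (2^n) (4 |B_r|)` with `B_r` a Hamming ball, and for `n ≤ 8` one explicit
linear code attains this for all `r` except `(n, r) = (7, 2)`. There the maximum is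
`104 = 4 · 29 - 2 · 6`: three words of length 7 have pairwise distances summing to at most 14, so
two distinct pairs of codewords are within distance 4, and radius-2 balls around two such words
share at least 6 points.
-/

theorem Finset.sum_comp_eq_card_smul_add_sum_card_filter_le_smul {α M : Type*} [AddCommGroup M]
    (s : Finset α) (g : α → ℕ) {m : ℕ} (hg : ∀ y ∈ s, g y ≤ m) (f : ℕ → M) :
    ∑ y ∈ s, f (g y) = #s • f m + ∑ r ∈ range m, #{y ∈ s | g y ≤ r} • (f r - f (r + 1)) := by
  have telescope : ∀ y ∈ s,
      f (g y) = f m + ∑ r ∈ range m, if g y ≤ r then f r - f (r + 1) else 0 := by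
    intro y hy
    rw [← sum_filter, show {r ∈ range m | g y ≤ r} = Ico (g y) m by ext; simp [and_comm],
      sum_Ico_eq_sub _ (hg y hy), sum_range_sub', sum_range_sub']
    abel
  rw [sum_congr rfl telescope, sum_add_distrib, sum_const, sum_comm]
  congr 1
  refine sum_congr rfl fun r _ => ?_
  rw [← sum_filter, sum_const]

theorem Finset.sum_comp_le_sum_comp_of_card_filter_le {α : Type*} (s : Finset α)
    {g g' : α → ℕ} {m : ℕ} (hg : ∀ y ∈ s, g y ≤ m) (hg' : ∀ y ∈ s, g' y ≤ m) {f : ℕ → ℝ}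
    (hf : ∀ r < m, f (r + 1) ≤ f r) (h : ∀ r < m, #{y ∈ s | g' y ≤ r} ≤ #{y ∈ s | g y ≤ r}) :
    ∑ y ∈ s, f (g' y) ≤ ∑ y ∈ s, f (g y) := by
  rw [sum_comp_eq_card_smul_add_sum_card_filter_le_smul s g hg,
    sum_comp_eq_card_smul_add_sum_card_filter_le_smul s g' hg']
  refine add_le_add le_rfl (sum_le_sum fun r hr => ?_)
  rw [mem_range] at hr
  exact nsmul_le_nsmul_left (sub_nonneg.2 (hf r hr)) (h r hr)

theorem Finset.card_biUnion_add_card_inter_add_card_inter_le {ι α : Type*} [Fintype ι]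
    [DecidableEq ι] [DecidableEq α] (B : ι → Finset α) {a b c d : ι} (hab : a ≠ b) (hcd : c ≠ d)
    (hbc : b ≠ c) (hbd : b ≠ d) :
    #(univ.biUnion B) + #(B a ∩ B b) + #(B c ∩ B d) ≤ ∑ i, #(B i) := by
  set U := univ.biUnion B
  have hcard : ∀ t ⊆ U, #t = ∑ y ∈ U, if y ∈ t then 1 else 0 := fun t ht => by
    rw [← card_filter, filter_mem_eq_inter, inter_eq_right.2 ht]
  have hsub : ∀ i, B i ⊆ U := fun i => subset_biUnion_of_mem B (mem_univ i)
  rw [hcard (B a ∩ B b) (inter_subset_left.trans (hsub a)),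
    hcard (B c ∩ B d) (inter_subset_left.trans (hsub c)), sum_congr rfl fun i _ => hcard _ (hsub i),
    sum_comm, card_eq_sum_ones, ← sum_add_distrib, ← sum_add_distrib]
  refine sum_le_sum fun y hy => ?_
  obtain ⟨e, -, hye⟩ := mem_biUnion.1 hy
  rw [← card_filter]
  have hle : ∀ s : Finset ι, (∀ i ∈ s, y ∈ B i) → #s ≤ #{i | y ∈ B i} := fun s hs =>
    card_le_card fun i hi => mem_filter.2 ⟨mem_univ i, hs i hi⟩
  by_cases h₁ : y ∈ B a ∩ B b <;> by_cases h₂ : y ∈ B c ∩ B d <;>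
    simp only [h₁, h₂, if_true, if_false] <;> simp only [mem_inter] at h₁ h₂
  · exact (card_eq_three.2 ⟨b, c, d, hbc, hbd, hcd, rfl⟩).ge.trans (hle _ (by simp [h₁, h₂]))
  · exact (card_pair hab).ge.trans (hle _ (by simp [h₁]))
  · exact (card_pair hcd).ge.trans (hle _ (by simp [h₂]))
  · exact (card_singleton e).ge.trans (hle _ (by simp [hye]))

section HammingBall

variable {ι β : Type*} [Fintype ι] [DecidableEq ι] [Fintype β] [DecidableEq β]

def hammingBall (u : ι → β) (r : ℕ) : Finset (ι → β) :=
  {y | hammingDist u y ≤ r}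

@[simp]
theorem mem_hammingBall {u y : ι → β} {r : ℕ} : y ∈ hammingBall u r ↔ hammingDist u y ≤ r := by
  simp [hammingBall]

theorem map_addLeft_hammingBall [AddGroup β] (u x : ι → β) (r : ℕ) :
    (hammingBall x r).map (Equiv.addLeft u).toEmbedding = hammingBall (u + x) r := by
  ext y
  simp [mem_map_equiv, hammingDist_eq_hammingNorm, neg_add_rev, add_assoc]

theorem card_hammingBall [AddGroup β] (u : ι → β) (r : ℕ) :
    #(hammingBall u r) = #(hammingBall (0 : ι → β) r) := by
  rw [← card_map (Equiv.addLeft (-u)).toEmbedding, map_addLeft_hammingBall, neg_add_cancel]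

theorem card_hammingBall_inter [AddGroup β] (u v : ι → β) (r s : ℕ) :
    #(hammingBall u r ∩ hammingBall v s) =
      #(hammingBall (0 : ι → β) r ∩ hammingBall (-u + v) s) := by
  rw [← card_map (Equiv.addLeft (-u)).toEmbedding, map_inter, map_addLeft_hammingBall,
    map_addLeft_hammingBall, neg_add_cancel]

end HammingBall

theorem hammingDist_add_hammingDist_add_hammingDist_le {ι : Type*} [Fintype ι]
    (u v w : ι → ZMod 2) :
    hammingDist u v + hammingDist u w + hammingDist v w ≤ 2 * Fintype.card ι := by
  have hpt : ∀ x y z : ZMod 2,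
      (if x ≠ y then 1 else 0) + (if x ≠ z then 1 else 0) + (if y ≠ z then 1 else 0) ≤ 2 := by
    decide
  calc hammingDist u v + hammingDist u w + hammingDist v w
      = ∑ k, ((if u k ≠ v k then 1 else 0) + (if u k ≠ w k then 1 else 0) +
          (if v k ≠ w k then 1 else 0)) := by
        simp only [hammingDist, card_filter, sum_add_distrib]
    _ ≤ ∑ _k : ι, 2 := sum_le_sum fun k _ => hpt _ _ _
    _ = 2 * Fintype.card ι := by simp [mul_comm]

theorem dmin_le_iff {m : ℕ} {C : Fin 4 → Fin m → ZMod 2} {y : Fin m → ZMod 2} {r : ℕ} :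
    dmin C y ≤ r ↔ ∃ i, hammingDist (C i) y ≤ r :=
  (inf'_le_iff _).trans (by simp)

theorem dmin_le_length {m : ℕ} (C : Fin 4 → Fin m → ZMod 2) (y : Fin m → ZMod 2) : dmin C y ≤ m :=
  dmin_le_iff.2 ⟨0, hammingDist_le_card_fintype.trans (Fintype.card_fin m).le⟩

theorem lam_eq_sum {m : ℕ} (C : Fin 4 → Fin m → ZMod 2) (ε : ℝ) :
    lam C ε = 1 / 4 * ∑ y, (1 - ε) ^ (m - dmin C y) * ε ^ dmin C y := by
  have hmaps : ∀ y ∈ (univ : Finset (Fin m → ZMod 2)), dmin C y ∈ range (m + 1) :=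
    fun y _ => mem_range_succ_iff.2 (dmin_le_length C y)
  rw [lam, ← sum_fiberwise_of_maps_to hmaps]
  congr 1
  refine sum_congr rfl fun d _ => ?_
  rw [sum_congr rfl fun y hy => by rw [(mem_filter.1 hy).2], sum_const, nsmul_eq_mul, alpha,
    mul_assoc]

def coverCard {m : ℕ} (C : Fin 4 → Fin m → ZMod 2) (r : ℕ) : ℕ :=
  #{y | dmin C y ≤ r}

theorem coverCard_eq_card_biUnion {m : ℕ} (C : Fin 4 → Fin m → ZMod 2) (r : ℕ) :
    coverCard C r = #(univ.biUnion fun i => hammingBall (C i) r) := by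
  rw [coverCard]
  congr 1
  ext y
  simp [dmin_le_iff]

theorem lam_le_lam_of_coverCard_le {m : ℕ} {C C' : Fin 4 → Fin m → ZMod 2} {ε : ℝ}
    (hε₀ : 0 ≤ ε) (hε₁ : ε ≤ 1 / 2) (h : ∀ r < m, coverCard C' r ≤ coverCard C r) :
    lam C' ε ≤ lam C ε := by
  rw [lam_eq_sum, lam_eq_sum]
  refine mul_le_mul_of_nonneg_left (sum_comp_le_sum_comp_of_card_filter_le univ
    (f := fun d => (1 - ε) ^ (m - d) * ε ^ d) (fun y _ => dmin_le_length C y)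
    (fun y _ => dmin_le_length C' y) (fun r hr => ?_) h) (by norm_num)
  have hpos : 0 ≤ (1 - ε) ^ (m - (r + 1)) * ε ^ r :=
    mul_nonneg (pow_nonneg (by linarith) _) (pow_nonneg hε₀ _)
  rw [show m - r = m - (r + 1) + 1 by omega, pow_succ, pow_succ]
  nlinarith [mul_nonneg hpos (by linarith : (0 : ℝ) ≤ 1 - 2 * ε)]

theorem coverCard_le_two_pow {m : ℕ} (C : Fin 4 → Fin m → ZMod 2) (r : ℕ) :
    coverCard C r ≤ 2 ^ m :=
  (card_le_univ _).trans_eq (by simp)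

theorem coverCard_le_four_mul {m : ℕ} (C : Fin 4 → Fin m → ZMod 2) (r : ℕ) :
    coverCard C r ≤ 4 * #(hammingBall (0 : Fin m → ZMod 2) r) :=
  (coverCard_eq_card_biUnion C r).trans_le <| card_biUnion_le.trans_eq (by simp [card_hammingBall])

theorem exists_hammingDist_le_four (C : Fin 4 → Fin 7 → ZMod 2) (b : Fin 4) :
    ∃ c d, c ≠ d ∧ b ≠ c ∧ b ≠ d ∧ hammingDist (C c) (C d) ≤ 4 := by
  obtain ⟨i, j, k, hij, hik, hjk, hbi, hbj, hbk⟩ :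
      ∃ i j k : Fin 4, i ≠ j ∧ i ≠ k ∧ j ≠ k ∧ b ≠ i ∧ b ≠ j ∧ b ≠ k := by
    revert b; decide
  have := hammingDist_add_hammingDist_add_hammingDist_le (C i) (C j) (C k)
  rw [Fintype.card_fin] at this
  by_cases h₁ : hammingDist (C i) (C j) ≤ 4
  · exact ⟨i, j, hij, hbi, hbj, h₁⟩
  by_cases h₂ : hammingDist (C i) (C k) ≤ 4
  · exact ⟨i, k, hik, hbi, hbk, h₂⟩
  exact ⟨j, k, hjk, hbj, hbk, by omega⟩

set_option maxRecDepth 100000 in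
theorem six_le_card_hammingBall_inter {u v : Fin 7 → ZMod 2} (h : hammingDist u v ≤ 4) :
    6 ≤ #(hammingBall u 2 ∩ hammingBall v 2) := by
  have key : ∀ w : Fin 7 → ZMod 2, hammingDist 0 w ≤ 4 →
      6 ≤ #{z | hammingDist 0 z ≤ 2 ∧ hammingDist w z ≤ 2} := by
    decide
  rw [card_hammingBall_inter, hammingBall, hammingBall, ← filter_and]
  apply key
  rwa [hammingDist_zero_left, ← hammingDist_eq_hammingNorm]

theorem coverCard_two_le (C : Fin 4 → Fin 7 → ZMod 2) : coverCard C 2 ≤ 104 := by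
  obtain ⟨a, b, hab, -, -, h₁⟩ := exists_hammingDist_le_four C 0
  obtain ⟨c, d, hcd, hbc, hbd, h₂⟩ := exists_hammingDist_le_four C b
  have hball : ∀ i, #(hammingBall (C i) 2) = 29 := fun i => by
    rw [card_hammingBall]; decide
  have := card_biUnion_add_card_inter_add_card_inter_le (fun i => hammingBall (C i) 2)
    hab hcd hbc hbd
  simp only [hball, sum_const, card_univ, Fintype.card_fin, smul_eq_mul] at this
  have := six_le_card_hammingBall_inter h₁
  have := six_le_card_hammingBall_inter h₂
  rw [coverCard_eq_card_biUnion]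
  omega

theorem isLinearCode_vecCons {m : ℕ} (a b : Fin m → ZMod 2) : IsLinearCode ![0, a, b, a + b] := by
  let f : ZMod 2 × ZMod 2 →ₗ[ZMod 2] Fin m → ZMod 2 :=
    (LinearMap.fst _ _ _).smulRight a + (LinearMap.snd _ _ _).smulRight b
  refine ⟨(LinearMap.range f).toAddSubgroup, ?_⟩
  ext x
  simp only [Set.mem_range, Submodule.coe_toAddSubgroup, LinearMap.coe_range]
  constructor
  · rintro ⟨i, rfl⟩
    fin_cases i
    exacts [⟨(0, 0), by simp [f]⟩, ⟨(1, 0), by simp [f]⟩, ⟨(0, 1), by simp [f]⟩,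
      ⟨(1, 1), by simp [f]⟩]
  · rintro ⟨⟨s, t⟩, rfl⟩
    have h01 : ∀ s : ZMod 2, s = 0 ∨ s = 1 := by decide
    rcases h01 s with rfl | rfl <;> rcases h01 t with rfl | rfl
    exacts [⟨0, by simp [f]⟩, ⟨2, by simp [f]⟩, ⟨1, by simp [f]⟩, ⟨3, by simp [f]⟩]

/-- Column `k` of the generator matrix is `(a k, b k)`; for each `n ≤ 8` its first `n` columns
already give an optimal code. -/
def optimalCode (n : ℕ) : Fin 4 → Fin n → ZMod 2 :=
  ![0, a, b, a + b]
where
  a (k : Fin n) : ZMod 2 := [1, 1, 0, 1, 1, 1, 0, 1].getD k 0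
  b (k : Fin n) : ZMod 2 := [1, 0, 1, 1, 0, 1, 1, 0].getD k 0

set_option maxRecDepth 100000 in
theorem coverCard_le_coverCard_optimalCode {n r : ℕ} (hn : n ≤ 8) (C : Fin 4 → Fin n → ZMod 2)
    (hr : r < n) : coverCard C r ≤ coverCard (optimalCode n) r := by
  by_cases h72 : n = 7 ∧ r = 2
  · obtain ⟨rfl, rfl⟩ := h72
    exact (coverCard_two_le C).trans (by decide)
  refine (le_min (coverCard_le_two_pow C r) (coverCard_le_four_mul C r)).trans ?_
  interval_cases n <;> interval_cases r <;> first | decide | exact absurd ⟨rfl, rfl⟩ h72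

/-- For block length `n ≤ 8`, linear `(n,2)` codes are optimal on the BSC. -/
theorem stmt7 (n : ℕ) (hn : n ≤ 8) (ε : ℝ) (hε1 : 0 < ε) (hε2 : ε < 1/2) :
    ∃ C : Fin 4 → Fin n → ZMod 2, IsLinearCode C ∧
      ∀ C' : Fin 4 → Fin n → ZMod 2, lam C' ε ≤ lam C ε :=
  ⟨optimalCode n, isLinearCode_vecCons _ _, fun C' =>
    lam_le_lam_of_coverCard_le hε1.le hε2.le fun _ hr =>
      coverCard_le_coverCard_optimalCode hn C' hr⟩
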